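/- Let θ ∈ (0,1) be irrational and suppose θ is well approximable: for every ε > 0 there exist coprime integers m, n with n arbitrarily large and |nθ − m| < ε/n. Fix C ≥ 1 and define, for each j ≥ 1, γ(j) ∈ {-2, 2i, -2i, 1+2i, 1-2i} to be the element depending only on which interval (k/8, (k+1)/8) contains the fractional part of jθ (as determined by the maximization of Re(γ·e^{2πi jθ})). Then there exist arbitrarily large n such that γ(j) = γ(j−n) for all integers j with n < j ≤ Cn. -/
import Mathlib


open Complex

/-- The finite set Γ₀ = {-2, 2i, -2i, 1+2i, 1-2i}. -/
noncomputable def Gamma0 : Finset ℂ :=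
  {-2, 2 * I, -2 * I, 1 + 2 * I, 1 - 2 * I}

/-- γ(j) is the element of Γ₀ maximizing Re(γ·e^{2πijθ}). -/
def IsGammaSeq (θ : ℝ) (γ : ℕ → ℂ) : Prop :=
  ∀ j : ℕ, 1 ≤ j → γ j ∈ Gamma0 ∧
    ∀ γ' ∈ Gamma0, (γ' * Complex.exp (2 * Real.pi * θ * j * I)).re ≤
      (γ j * Complex.exp (2 * Real.pi * θ * j * I)).re

noncomputable def G : ℤ → ℂ := fun k =>
  if k % 8 = 0 ∨ k % 8 = 1 then 1 - 2*I
  else if k % 8 = 2 then -2*I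
  else if k % 8 = 3 ∨ k % 8 = 4 then -2
  else if k % 8 = 5 then 2*I
  else 1 + 2*I

lemma G_mem (k : ℤ) : G k ∈ Gamma0 := by
  unfold G Gamma0; split_ifs <;> simp

lemma G_sub_mul (k m : ℤ) : G (k - 8*m) = G k := by
  unfold G
  have : (k - 8*m) % 8 = k % 8 := by omega
  rw [this]

lemma re_mul (a b t : ℝ) : (((a:ℂ) + (b:ℂ)*I) * Complex.exp ((t:ℂ) * I)).re
    = a * Real.cos t - b * Real.sin t := by
  rw [Complex.exp_mul_I]
  simp [add_mul, mul_re, Complex.cos_ofReal_re, Complex.sin_ofReal_re]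
  ring

lemma re1 (t:ℝ) : ((-2:ℂ) * Complex.exp ((t:ℂ)*I)).re = -2 * Real.cos t := by
  rw [show (-2:ℂ) = ((-2:ℝ):ℂ) + ((0:ℝ):ℂ)*I by norm_num, re_mul]; ring
lemma re2 (t:ℝ) : ((2*I:ℂ) * Complex.exp ((t:ℂ)*I)).re = -2 * Real.sin t := by
  rw [show (2*I:ℂ) = ((0:ℝ):ℂ) + ((2:ℝ):ℂ)*I by norm_num, re_mul]; ring
lemma re3 (t:ℝ) : ((-(2*I):ℂ) * Complex.exp ((t:ℂ)*I)).re = 2 * Real.sin t := by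
  rw [show (-(2*I):ℂ) = ((0:ℝ):ℂ) + ((-2:ℝ):ℂ)*I by push_cast; ring, re_mul]; ring
lemma re4 (t:ℝ) : ((1+2*I:ℂ) * Complex.exp ((t:ℂ)*I)).re = Real.cos t - 2 * Real.sin t := by
  rw [show (1+2*I:ℂ) = ((1:ℝ):ℂ) + ((2:ℝ):ℂ)*I by norm_num, re_mul]; ring
lemma re5 (t:ℝ) : ((1-2*I:ℂ) * Complex.exp ((t:ℂ)*I)).re = Real.cos t + 2 * Real.sin t := by
  rw [show (1-2*I:ℂ) = ((1:ℝ):ℂ) + ((-2:ℝ):ℂ)*I by push_cast; ring, re_mul]; ring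

lemma sum_eq (t:ℝ) : Real.sin t + Real.cos t = Real.sqrt 2 * Real.sin (t + Real.pi/4) := by
  rw [Real.sin_add, Real.cos_pi_div_four, Real.sin_pi_div_four]
  have h2 : Real.sqrt 2 ^ 2 = 2 := Real.sq_sqrt (by norm_num)
  linear_combination (-(Real.sin t + Real.cos t)/2) * h2

lemma diff_eq (t:ℝ) : Real.sin t - Real.cos t = Real.sqrt 2 * Real.sin (t - Real.pi/4) := by
  rw [Real.sin_sub, Real.cos_pi_div_four, Real.sin_pi_div_four]
  have h2 : Real.sqrt 2 ^ 2 = 2 := Real.sq_sqrt (by norm_num)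
  linear_combination (-(Real.sin t - Real.cos t)/2) * h2

lemma caseA (x:ℝ) (h1 : 0 < x) (h2 : x < 1/4) :
    ∀ γ' ∈ Gamma0, γ' ≠ 1 - 2*I →
    (γ' * Complex.exp ((↑(2*Real.pi*x):ℂ) * I)).re <
    ((1-2*I) * Complex.exp ((↑(2*Real.pi*x):ℂ) * I)).re := by
  have hπ := Real.pi_pos
  set t := 2*Real.pi*x with ht
  have hs : 0 < Real.sin t := Real.sin_pos_of_pos_of_lt_pi (by nlinarith) (by nlinarith)
  have hc : 0 < Real.cos t := Real.cos_pos_of_mem_Ioo ⟨by nlinarith, by nlinarith⟩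
  intro γ' hmem hne
  simp [Gamma0] at hmem
  rcases hmem with h|h|h|h|h
  · subst h; rw [re1, re5]; linarith
  · subst h; rw [re2, re5]; linarith
  · subst h; rw [re3, re5]; linarith
  · subst h; rw [re4, re5]; linarith
  · exact absurd h hne

lemma re3' (t:ℝ) : ((-2*I:ℂ) * Complex.exp ((t:ℂ)*I)).re = 2 * Real.sin t := by
  rw [show (-2*I:ℂ) = -(2*I) by ring, re3]

lemma sqrt2_pos : (0:ℝ) < Real.sqrt 2 := Real.sqrt_pos.mpr (by norm_num)

lemma caseB (x:ℝ) (h1 : 1/4 < x) (h2 : x < 3/8) :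
    ∀ γ' ∈ Gamma0, γ' ≠ -2*I →
    (γ' * Complex.exp ((↑(2*Real.pi*x):ℂ) * I)).re <
    ((-2*I) * Complex.exp ((↑(2*Real.pi*x):ℂ) * I)).re := by
  have hπ := Real.pi_pos
  set t := 2*Real.pi*x with ht
  have hs : 0 < Real.sin t := Real.sin_pos_of_pos_of_lt_pi (by nlinarith) (by nlinarith)
  have hc : Real.cos t < 0 := Real.cos_neg_of_pi_div_two_lt_of_lt (by nlinarith) (by nlinarith)
  have hsc : 0 < Real.sin t + Real.cos t := by
    rw [sum_eq]
    exact mul_pos sqrt2_pos (Real.sin_pos_of_pos_of_lt_pi (by nlinarith) (by nlinarith))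
  intro γ' hmem hne
  simp [Gamma0] at hmem
  rcases hmem with h|h|h|h|h
  · subst h; rw [re1, re3']; linarith
  · subst h; rw [re2, re3']; linarith
  · exact absurd (by rw [h]; ring) hne
  · subst h; rw [re4, re3']; linarith
  · subst h; rw [re5, re3']; linarith

lemma caseC (x:ℝ) (h1 : 3/8 < x) (h2 : x < 5/8) :
    ∀ γ' ∈ Gamma0, γ' ≠ -2 →
    (γ' * Complex.exp ((↑(2*Real.pi*x):ℂ) * I)).re <
    ((-2) * Complex.exp ((↑(2*Real.pi*x):ℂ) * I)).re := by
  have hπ := Real.pi_pos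
  set t := 2*Real.pi*x with ht
  have hc : Real.cos t < 0 := Real.cos_neg_of_pi_div_two_lt_of_lt (by nlinarith) (by nlinarith)
  have hsc : Real.sin t + Real.cos t < 0 := by
    rw [sum_eq]
    have h' : Real.sin (t + Real.pi/4 - Real.pi) > 0 :=
      Real.sin_pos_of_pos_of_lt_pi (by nlinarith) (by nlinarith)
    rw [Real.sin_sub_pi] at h'
    nlinarith [sqrt2_pos]
  have hd : 0 < Real.sin t - Real.cos t := by
    rw [diff_eq]
    exact mul_pos sqrt2_pos (Real.sin_pos_of_pos_of_lt_pi (by nlinarith) (by nlinarith))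
  intro γ' hmem hne
  simp [Gamma0] at hmem
  rcases hmem with h|h|h|h|h
  · exact absurd h hne
  · subst h; rw [re2, re1]; linarith
  · subst h; rw [re3, re1]; linarith
  · subst h; rw [re4, re1]; linarith
  · subst h; rw [re5, re1]; linarith

lemma caseD (x:ℝ) (h1 : 5/8 < x) (h2 : x < 3/4) :
    ∀ γ' ∈ Gamma0, γ' ≠ 2*I →
    (γ' * Complex.exp ((↑(2*Real.pi*x):ℂ) * I)).re <
    ((2*I) * Complex.exp ((↑(2*Real.pi*x):ℂ) * I)).re := by
  have hπ := Real.pi_pos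
  set t := 2*Real.pi*x with ht
  have hs : Real.sin t < 0 := by
    have h' : Real.sin (t - Real.pi) > 0 :=
      Real.sin_pos_of_pos_of_lt_pi (by nlinarith) (by nlinarith)
    rw [Real.sin_sub_pi] at h'
    linarith
  have hc : Real.cos t < 0 := Real.cos_neg_of_pi_div_two_lt_of_lt (by nlinarith) (by nlinarith)
  have hd : Real.sin t - Real.cos t < 0 := by
    rw [diff_eq]
    have h' : Real.sin (t - Real.pi/4 - Real.pi) > 0 :=
      Real.sin_pos_of_pos_of_lt_pi (by nlinarith) (by nlinarith)
    rw [Real.sin_sub_pi] at h'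
    nlinarith [sqrt2_pos]
  intro γ' hmem hne
  simp [Gamma0] at hmem
  rcases hmem with h|h|h|h|h
  · subst h; rw [re1, re2]; linarith
  · exact absurd h hne
  · subst h; rw [re3, re2]; linarith
  · subst h; rw [re4, re2]; linarith
  · subst h; rw [re5, re2]; linarith

lemma caseE (x:ℝ) (h1 : 3/4 < x) (h2 : x < 1) :
    ∀ γ' ∈ Gamma0, γ' ≠ 1 + 2*I →
    (γ' * Complex.exp ((↑(2*Real.pi*x):ℂ) * I)).re <
    ((1 + 2*I) * Complex.exp ((↑(2*Real.pi*x):ℂ) * I)).re := by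
  have hπ := Real.pi_pos
  set t := 2*Real.pi*x with ht
  have hs : Real.sin t < 0 := by
    have h' : Real.sin (t - Real.pi) > 0 :=
      Real.sin_pos_of_pos_of_lt_pi (by nlinarith) (by nlinarith)
    rw [Real.sin_sub_pi] at h'
    linarith
  have hc : 0 < Real.cos t := by
    have h' : 0 < Real.cos (t - 2*Real.pi) :=
      Real.cos_pos_of_mem_Ioo ⟨by nlinarith, by nlinarith⟩
    rwa [Real.cos_sub_two_pi] at h'
  intro γ' hmem hne
  simp [Gamma0] at hmem
  rcases hmem with h|h|h|h|h
  · subst h; rw [re1, re4]; linarith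
  · subst h; rw [re2, re4]; linarith
  · subst h; rw [re3, re4]; linarith
  · exact absurd h hne
  · subst h; rw [re5, re4]; linarith

lemma strictMax (x : ℝ) (k : ℤ) (h1 : (k:ℝ) < 8*x) (h2 : 8*x < (k:ℝ)+1) :
    ∀ γ' ∈ Gamma0, γ' ≠ G k →
    (γ' * Complex.exp ((↑(2*Real.pi*x):ℂ) * I)).re <
    (G k * Complex.exp ((↑(2*Real.pi*x):ℂ) * I)).re := by
  set q : ℤ := k / 8 with hq
  set r : ℤ := k % 8 with hr
  have hk : 8 * q + r = k := Int.mul_ediv_add_emod k 8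
  have hr0 : 0 ≤ r := Int.emod_nonneg k (by norm_num)
  have hr8 : r < 8 := Int.emod_lt_of_pos k (by norm_num)
  have hGk : G k = G r := by
    unfold G
    rw [hr, Int.emod_emod_of_dvd k dvd_rfl]
  set x' : ℝ := x - q with hx'
  have hexp : Complex.exp ((↑(2*Real.pi*x):ℂ) * I) = Complex.exp ((↑(2*Real.pi*x'):ℂ) * I) := by
    have : ((↑(2*Real.pi*x):ℂ) * I) = (↑(2*Real.pi*x'):ℂ) * I + q * (2*(Real.pi:ℂ)*I) := by
      rw [hx']; push_cast; ring
    rw [this, Complex.exp_add, Complex.exp_int_mul_two_pi_mul_I, mul_one]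
  have hkR : (8:ℝ) * (q:ℝ) + (r:ℝ) = (k:ℝ) := by exact_mod_cast congrArg (Int.cast : ℤ → ℝ) hk
  have hb1 : (r:ℝ) < 8 * x' := by rw [hx']; linarith
  have hb2 : 8 * x' < (r:ℝ) + 1 := by rw [hx']; linarith
  rw [hGk, hexp]
  interval_cases r
  · simpa [show G 0 = 1 - 2*I by norm_num [G]] using
      caseA x' (by norm_num at hb1 hb2 ⊢; linarith) (by norm_num at hb1 hb2 ⊢; linarith)
  · simpa [show G 1 = 1 - 2*I by norm_num [G]] using
      caseA x' (by norm_num at hb1 hb2 ⊢; linarith) (by norm_num at hb1 hb2 ⊢; linarith)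
  · simpa [show G 2 = -2*I by norm_num [G]] using
      caseB x' (by norm_num at hb1 hb2 ⊢; linarith) (by norm_num at hb1 hb2 ⊢; linarith)
  · simpa [show G 3 = -2 by norm_num [G]] using
      caseC x' (by norm_num at hb1 hb2 ⊢; linarith) (by norm_num at hb1 hb2 ⊢; linarith)
  · simpa [show G 4 = -2 by norm_num [G]] using
      caseC x' (by norm_num at hb1 hb2 ⊢; linarith) (by norm_num at hb1 hb2 ⊢; linarith)
  · simpa [show G 5 = 2*I by norm_num [G]] using
      caseD x' (by norm_num at hb1 hb2 ⊢; linarith) (by norm_num at hb1 hb2 ⊢; linarith)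
  · simpa [show G 6 = 1 + 2*I by norm_num [G]] using
      caseE x' (by norm_num at hb1 hb2 ⊢; linarith) (by norm_num at hb1 hb2 ⊢; linarith)
  · simpa [show G 7 = 1 + 2*I by norm_num [G]] using
      caseE x' (by norm_num at hb1 hb2 ⊢; linarith) (by norm_num at hb1 hb2 ⊢; linarith)

lemma gamma_eq (θ:ℝ) (γ : ℕ → ℂ) (hγ : IsGammaSeq θ γ) (j:ℕ) (hj : 1 ≤ j) (k:ℤ)
    (h1 : (k:ℝ) < 8*(θ*j)) (h2 : 8*(θ*j) < (k:ℝ)+1) : γ j = G k := by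
  obtain ⟨hmem, hmax⟩ := hγ j hj
  by_contra hne
  have hlt := strictMax (θ*j) k h1 h2 (γ j) hmem hne
  have hE : ((↑(2*Real.pi*(θ*(j:ℝ))):ℂ)) * I = 2 * (Real.pi:ℂ) * (θ:ℂ) * (j:ℂ) * I := by
    push_cast; ring
  rw [hE] at hlt
  have hle := hmax (G k) (G_mem k)
  linarith

set_option maxHeartbeats 1000000 in
/-- If θ ∈ (0,1) is irrational and well approximable, then for any C ≥ 1 there are
arbitrarily large n such that γ(j) = γ(j−n) for all n < j ≤ Cn. -/
theorem well_approximable_regular_window (θ : ℝ) (hθ : θ ∈ Set.Ioo (0 : ℝ) 1)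
    (hirr : Irrational θ)
    (hwell : ∀ κ : ℝ, 0 < κ → ∀ N : ℕ, ∃ (n : ℕ) (m : ℤ), N ≤ n ∧ 0 < n ∧
      Int.gcd m n = 1 ∧ |(n : ℝ) * θ - m| < κ / n)
    (C : ℝ) (hC : 1 ≤ C) (γ : ℕ → ℂ) (hγ : IsGammaSeq θ γ) :
    ∀ N : ℕ, ∃ n : ℕ, N ≤ n ∧ ∀ j : ℕ, n < j → (j : ℝ) ≤ C * n → γ j = γ (j - n) := by
  intro N
  have hC0 : (0:ℝ) < C := lt_of_lt_of_le one_pos hC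
  obtain ⟨n, m, hNn, hn0, hgcd, hδ⟩ := hwell (1/(16*(C+1))) (by positivity) N
  refine ⟨n, hNn, ?_⟩
  intro j hjn hjC
  have hn1 : (1:ℝ) ≤ (n:ℝ) := by exact_mod_cast hn0
  have hn0R : (0:ℝ) < (n:ℝ) := by linarith
  obtain ⟨δ, hδdef⟩ : ∃ d:ℝ, d = (n:ℝ)*θ - (m:ℝ) := ⟨_, rfl⟩
  rw [← hδdef] at hδ
  have hδne : δ ≠ 0 := by
    intro h
    rw [hδdef] at h
    have hθeq : θ = (m:ℝ)/(n:ℝ) := by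
      field_simp at h ⊢; linarith [h]
    apply hirr
    exact ⟨(m:ℚ)/(n:ℚ), by push_cast [hθeq]; ring⟩
  have habs : |δ| < (1/(16*(C+1)))/n := hδ
  clear hδ
  have hjR : (n:ℝ) < (j:ℝ) := by exact_mod_cast hjn
  have hd0 : (0:ℝ) ≤ |δ| := abs_nonneg δ
  have hdle : δ ≤ |δ| := le_abs_self δ
  have hdge : -|δ| ≤ δ := neg_abs_le δ
  have hbound : ∀ a : ℝ, 0 ≤ a → a ≤ 8*C*(n:ℝ) → a*|δ| ≤ 1/2 := by
    intro a ha0 ha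
    have h1 : a*|δ| ≤ 8*C*(n:ℝ)*|δ| := mul_le_mul_of_nonneg_right ha hd0
    have h2 : 8*C*(n:ℝ)*|δ| ≤ 8*C*(n:ℝ)*((1/(16*(C+1)))/n) :=
      mul_le_mul_of_nonneg_left (le_of_lt habs) (by positivity)
    have h3 : 8*C*(n:ℝ)*((1/(16*(C+1)))/n) = C/(2*(C+1)) := by field_simp; ring
    have h4 : C/(2*(C+1)) ≤ 1/2 := by
      rw [div_le_div_iff₀ (by positivity) (by norm_num)]; nlinarith
    linarith
  -- key: common integer window
  have key : ∃ k:ℤ, ((k:ℝ) < 8*(θ*j) ∧ 8*(θ*j) < (k:ℝ)+1) ∧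
      ((k:ℝ) < 8*(θ*j) - 8*δ ∧ 8*(θ*j) - 8*δ < (k:ℝ)+1) := by
    by_cases hdvd : n ∣ 8*j
    · -- divisible case
      obtain ⟨q, hq⟩ := hdvd
      have h9 : 9 ≤ q := by nlinarith [hq, hjn]
      have hqR : 8*(j:ℝ) = (n:ℝ)*(q:ℝ) := by exact_mod_cast hq
      have h9R : (9:ℝ) ≤ (q:ℝ) := by exact_mod_cast h9
      have h8θj : 8*(θ*(j:ℝ)) = (q:ℝ)*(m:ℝ) + (q:ℝ)*δ := by
        rw [hδdef]; linear_combination θ * hqR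
      have hq8C : (q:ℝ) ≤ 8*C*(n:ℝ) := by nlinarith [hqR, hjC, hn1]
      have hqd : (q:ℝ)*|δ| ≤ 1/2 := hbound q (by positivity) hq8C
      have hq0 : (0:ℝ) ≤ (q:ℝ) := by linarith
      have hq80 : (0:ℝ) ≤ (q:ℝ) - 8 := by linarith
      have hA1 : (q:ℝ)*δ ≤ 1/2 := by
        linarith [mul_nonneg hq0 (sub_nonneg.mpr hdle), hqd]
      have hA2 : -(1/2) ≤ (q:ℝ)*δ := by
        linarith [mul_nonneg hq0 (show (0:ℝ) ≤ δ - (-|δ|) by linarith), hqd]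
      have hB1 : ((q:ℝ)-8)*δ ≤ 1/2 := by
        linarith [mul_nonneg hq80 (sub_nonneg.mpr hdle), hqd, hd0]
      have hB2 : -(1/2) ≤ ((q:ℝ)-8)*δ := by
        linarith [mul_nonneg hq80 (show (0:ℝ) ≤ δ - (-|δ|) by linarith), hqd, hd0]
      rcases hδne.lt_or_gt with hneg | hpos
      · -- δ < 0
        have hs1 : (q:ℝ)*δ < 0 := mul_neg_of_pos_of_neg (by linarith) hneg
        have hs2 : ((q:ℝ)-8)*δ < 0 := mul_neg_of_pos_of_neg (by linarith) hneg
        refine ⟨(q:ℤ)*m - 1, ?_, ?_⟩ <;> push_cast <;> constructor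
        · linarith [h8θj, hA2]
        · linarith [h8θj, hs1]
        · linarith [h8θj, hB2]
        · linarith [h8θj, hs2]
      · -- δ > 0
        have hs1 : 0 < (q:ℝ)*δ := mul_pos (by linarith) hpos
        have hs2 : 0 < ((q:ℝ)-8)*δ := mul_pos (by linarith) hpos
        refine ⟨(q:ℤ)*m, ?_, ?_⟩ <;> push_cast <;> constructor
        · linarith [h8θj, hs1]
        · linarith [h8θj, hA1]
        · linarith [h8θj, hs2]
        · linarith [h8θj, hB1]
    · -- non-divisible case
      have hjδ : 8*(j:ℝ)*|δ| ≤ 1/2 := by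
        apply hbound _ (by positivity)
        nlinarith [hjC, hn1]
      have hlow : ∀ c:ℤ, 1/(2*(n:ℝ)) ≤ |8*(θ*j) - (c:ℝ)| := by
        intro c
        have hne' : (8*j*m - c*n : ℤ) ≠ 0 := by
          intro h
          apply hdvd
          have hdvd' : (n:ℤ) ∣ (8*(j:ℤ)) * m := ⟨c, by linarith [h]⟩
          have hcop : IsCoprime (n:ℤ) m :=
            Int.isCoprime_iff_gcd_eq_one.mpr (by rwa [Int.gcd_comm] at hgcd)
          have h2 := hcop.dvd_of_dvd_mul_right hdvd'
          have : ((8*j : ℕ):ℤ) = 8*(j:ℤ) := by push_cast; ring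
          rw [← this] at h2
          exact_mod_cast h2
        have habs1 : (1:ℝ) ≤ |((8*j*m - c*n : ℤ):ℝ)| := by
          rw [← Int.cast_abs]
          exact_mod_cast Int.one_le_abs hne'
        have hid : (n:ℝ)*(8*(θ*j) - c) = ((8*j*m - c*n : ℤ):ℝ) + 8*j*δ := by
          rw [hδdef]; push_cast; ring
        have hvabs : |8*(j:ℝ)*δ| ≤ 1/2 := by
          rw [abs_mul, _root_.abs_of_nonneg (show (0:ℝ) ≤ 8*(j:ℝ) by positivity)]
          exact hjδ
        have h2' : 1/2 ≤ |((8*j*m - c*n : ℤ):ℝ) + 8*(j:ℝ)*δ| := by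
          have h := abs_sub_abs_le_abs_sub ((8*j*m - c*n : ℤ):ℝ) (-(8*(j:ℝ)*δ))
          rw [abs_neg, sub_neg_eq_add] at h
          linarith [habs1, hvabs, h]
        have h3' : (n:ℝ)*|8*(θ*j) - c| = |((8*j*m - c*n : ℤ):ℝ) + 8*(j:ℝ)*δ| := by
          rw [← _root_.abs_of_pos hn0R, ← abs_mul, hid]
        rw [div_le_iff₀ (show (0:ℝ) < 2*(n:ℝ) by positivity)]
        linarith [h2', h3']
      obtain ⟨k, hk⟩ : ∃ k:ℤ, k = ⌊8*(θ*j)⌋ := ⟨_, rfl⟩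
      have hfl1 : (k:ℝ) ≤ 8*(θ*j) := by rw [hk]; exact Int.floor_le _
      have hfl2 : 8*(θ*j) < (k:ℝ)+1 := by rw [hk]; exact Int.lt_floor_add_one _
      have hlo := hlow k
      have hhi := hlow (k+1)
      have hhiR : 1/(2*(n:ℝ)) ≤ |8*(θ*j) - ((k:ℝ)+1)| := by
        have hc : ((k+1 : ℤ):ℝ) = (k:ℝ)+1 := by push_cast; ring
        rwa [hc] at hhi
      have hpos2n : (0:ℝ) < 1/(2*(n:ℝ)) := by positivity
      have hlo' : (k:ℝ) + 1/(2*(n:ℝ)) ≤ 8*(θ*j) := by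
        rcases abs_cases (8*(θ*j) - (k:ℝ)) with ⟨he, _⟩ | ⟨he, _⟩ <;> rw [he] at hlo <;> linarith
      have hhi' : 8*(θ*j) ≤ (k:ℝ) + 1 - 1/(2*(n:ℝ)) := by
        rcases abs_cases (8*(θ*j) - ((k:ℝ)+1)) with ⟨he, _⟩ | ⟨he, _⟩ <;>
          rw [he] at hhiR <;> linarith
      have h8δ : 8*|δ| < 1/(2*(n:ℝ)) := by
        rw [lt_div_iff₀ (show (0:ℝ) < 2*(n:ℝ) by positivity)]
        have hb := hbound ((n:ℝ)) (by positivity) (by nlinarith [hn1, hC0])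
        -- n*|δ| ≤ 1/2 ; want 8|δ|*2n < 1 i.e. 16 n |δ| < 1
        have habs2 : |δ| * (16*(C+1)*(n:ℝ)) < 1 := by
          rw [div_div, lt_div_iff₀ (by positivity)] at habs
          linarith [habs]
        nlinarith [habs2, hd0, hn1, hC0]
      refine ⟨k, ⟨by linarith, hfl2⟩, ?_, ?_⟩
      · linarith [hlo', h8δ, hdle, hdge]
      · linarith [hhi', h8δ, hdle, hdge]
  obtain ⟨k, ⟨hk1, hk2⟩, hk3, hk4⟩ := key
  have hnle : n ≤ j := le_of_lt hjn
  have hjnR : ((j-n : ℕ):ℝ) = (j:ℝ) - (n:ℝ) := by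
    push_cast [hnle]; ring
  have e1 : γ j = G k := gamma_eq θ γ hγ j (by omega) k hk1 hk2
  have e2 : γ (j-n) = G (k - 8*m) := by
    have hsplit : θ*((j:ℝ) - n) = θ*j - (m:ℝ) - δ := by rw [hδdef]; ring
    apply gamma_eq θ γ hγ (j-n) (by omega) (k - 8*m)
    · rw [hjnR, hsplit]; push_cast; linarith
    · rw [hjnR, hsplit]; push_cast; linarith
  rw [e1, e2, G_sub_mul]
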